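/- arXiv:1405.2711 — 4 statements merged into one kernel-verified Lean document; each statement's English description precedes it below -/
import Mathlib

section
/- Let (G_i)_{i∈I} be a family of perfect groups and let c(G_i) denote the commutator width of G_i (the least n such that every element is a product of at most n commutators, or ∞). Then the product ∏_{i∈I} G_i is perfect if and only if the set I_∞ = {i : c(G_i) = ∞} is finite and the function i ↦ c(G_i) is bounded on I \ I_∞. -/
open scoped commutatorElement

/-- `g` is a product of (at most) `n` commutators. -/
def IsProdOfCommutators {G : Type*} [Group G] (g : G) (n : ℕ) : Prop :=
  ∃ a b : Fin n → G, g = (List.ofFn fun k => ⁅a k, b k⁆).prod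

/-- The commutator width of a group: the least `n : ℕ∞` such that every element is a product
of at most `n` commutators, and `⊤` (i.e. `∞`) if no such `n` exists. -/
noncomputable def commWidth (G : Type*) [Group G] : ℕ∞ :=
  sInf {N : ℕ∞ | ∃ n : ℕ, N = n ∧ ∀ g : G, IsProdOfCommutators g n}

/-!
If `∏ Gᵢ` is perfect, each of its elements is a product of some number `N` of commutators, and
then so is each coordinate. Choosing `gᵢ` not to be a product of `dᵢ` commutators whenever the
width of `Gᵢ` exceeds `dᵢ` therefore forces `dᵢ < N` at those indices. With `dᵢ` one less than
the width this bounds the finite widths; with `d` inverse to an enumeration of infinitely many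
indices of infinite width it is absurd. Conversely, a coordinate `gᵢ` is a product of `C`
commutators when the width of `Gᵢ` is finite, and the finitely many remaining coordinates need
only boundedly many.
-/

namespace IsProdOfCommutators

variable {G : Type*} [Group G] {g : G} {m n : ℕ}

theorem commutatorElement_mul (a b : G) (hg : IsProdOfCommutators g n) :
    IsProdOfCommutators (⁅a, b⁆ * g) (n + 1) := by
  obtain ⟨x, y, rfl⟩ := hg
  exact ⟨Fin.cons a x, Fin.cons b y, by simp [List.ofFn_succ]⟩

theorem mono (hmn : m ≤ n) (hg : IsProdOfCommutators g m) : IsProdOfCommutators g n := by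
  induction n, hmn using Nat.le_induction with
  | base => exact hg
  | succ n _ ih => simpa using ih.commutatorElement_mul 1 1

end IsProdOfCommutators

theorem mem_commutator_iff_exists_isProdOfCommutators {G : Type*} [Group G] {g : G} :
    g ∈ commutator G ↔ ∃ n, IsProdOfCommutators g n := by
  constructor
  · intro hg
    rw [commutator_eq_closure] at hg
    induction hg using Subgroup.closure_induction_left with
    | one => exact ⟨0, Fin.elim0, Fin.elim0, rfl⟩
    | mul_left _ hx _ _ ih =>
      obtain ⟨a, b, rfl⟩ := hx
      obtain ⟨n, hn⟩ := ih
      exact ⟨n + 1, hn.commutatorElement_mul a b⟩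
    | inv_mul_cancel _ hx _ _ ih =>
      obtain ⟨a, b, rfl⟩ := hx
      obtain ⟨n, hn⟩ := ih
      exact ⟨n + 1, commutatorElement_inv a b ▸ hn.commutatorElement_mul b a⟩
  · rintro ⟨n, a, b, rfl⟩
    refine Subgroup.list_prod_mem _ fun x hx => ?_
    obtain ⟨k, rfl⟩ := List.mem_ofFn.mp hx
    exact Subgroup.commutator_mem_commutator (Subgroup.mem_top _) (Subgroup.mem_top _)

theorem isProdOfCommutators_pi_iff {I : Type*} {G : I → Type*} [∀ i, Group (G i)]
    {g : ∀ i, G i} {n : ℕ} :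
    IsProdOfCommutators g n ↔ ∀ i, IsProdOfCommutators (g i) n := by
  constructor
  · rintro ⟨a, b, rfl⟩ i
    exact ⟨fun k => a k i, fun k => b k i, by rw [Pi.list_prod_apply, List.map_ofFn]; rfl⟩
  · intro h
    choose a b hab using h
    refine ⟨fun k i => a i k, fun k i => b i k, funext fun i => ?_⟩
    rw [Pi.list_prod_apply, List.map_ofFn]
    exact hab i

theorem commWidth_le_iff {G : Type*} [Group G] {n : ℕ} :
    commWidth G ≤ n ↔ ∀ g : G, IsProdOfCommutators g n := by
  refine ⟨fun h => ?_, fun h => sInf_le ⟨n, rfl, h⟩⟩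
  have hne : {N : ℕ∞ | ∃ n : ℕ, N = n ∧ ∀ g : G, IsProdOfCommutators g n}.Nonempty := by
    by_contra hempty
    rw [Set.not_nonempty_iff_eq_empty] at hempty
    simp [commWidth, hempty] at h
  obtain ⟨m, hm, hmg⟩ := csInf_mem hne
  have hmn : m ≤ n := by
    rw [commWidth, hm] at h
    exact_mod_cast h
  exact fun g => (hmg g).mono hmn

section Pi

variable {I : Type*} {G : I → Type*} [∀ i, Group (G i)]

theorem exists_lt_of_lt_commWidth_of_commutator_pi_eq_top
    (hpi : commutator (∀ i, G i) = ⊤) (d : I → ℕ) :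
    ∃ N : ℕ, ∀ i, (d i : ℕ∞) < commWidth (G i) → d i < N := by
  have hwitness : ∀ i, ∃ x : G i,
      (d i : ℕ∞) < commWidth (G i) → ¬IsProdOfCommutators x (d i) := by
    intro i
    by_cases hi : (d i : ℕ∞) < commWidth (G i)
    · obtain ⟨x, hx⟩ := not_forall.mp (commWidth_le_iff.not.mp hi.not_ge)
      exact ⟨x, fun _ => hx⟩
    · exact ⟨1, fun h => absurd h hi⟩
  choose g hg using hwitness
  obtain ⟨N, hN⟩ :=
    mem_commutator_iff_exists_isProdOfCommutators.mp (hpi ▸ Subgroup.mem_top g)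
  exact ⟨N, fun i hi => lt_of_not_ge fun hle =>
    hg i hi ((isProdOfCommutators_pi_iff.mp hN i).mono hle)⟩

theorem finite_commWidth_eq_top_of_commutator_pi_eq_top
    (hpi : commutator (∀ i, G i) = ⊤) : {i : I | commWidth (G i) = ⊤}.Finite := by
  by_contra hinf
  let e : ℕ → I := fun n => Set.Infinite.natEmbedding _ hinf n
  have he : Function.Injective e :=
    Subtype.val_injective.comp (Set.Infinite.natEmbedding _ hinf).injective
  obtain ⟨N, hN⟩ := exists_lt_of_lt_commWidth_of_commutator_pi_eq_top hpi (Function.invFun e)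
  have hwidth : commWidth (G (e N)) = ⊤ := (Set.Infinite.natEmbedding _ hinf N).2
  have hlt := hN (e N) (by rw [hwidth]; exact ENat.natCast_lt_top _)
  rw [Function.leftInverse_invFun he N] at hlt
  exact lt_irrefl N hlt

theorem exists_commWidth_le_of_commutator_pi_eq_top (hpi : commutator (∀ i, G i) = ⊤) :
    ∃ C : ℕ, ∀ i, commWidth (G i) ≠ ⊤ → commWidth (G i) ≤ C := by
  obtain ⟨N, hN⟩ := exists_lt_of_lt_commWidth_of_commutator_pi_eq_top hpi
    fun i => (commWidth (G i)).toNat - 1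
  refine ⟨N, fun i hi => ?_⟩
  have hlt := hN i
  lift commWidth (G i) to ℕ using hi with w
  simp only [ENat.toNat_natCast, Nat.cast_lt] at hlt
  exact_mod_cast (by omega : w ≤ N)

theorem commutator_pi_eq_top (hperf : ∀ i, commutator (G i) = ⊤)
    (hfin : {i : I | commWidth (G i) = ⊤}.Finite) {C : ℕ}
    (hC : ∀ i, commWidth (G i) ≠ ⊤ → commWidth (G i) ≤ C) :
    commutator (∀ i, G i) = ⊤ := by
  refine (Subgroup.eq_top_iff' _).mpr fun g => ?_
  choose m hm using fun i =>
    mem_commutator_iff_exists_isProdOfCommutators.mp ((hperf i) ▸ Subgroup.mem_top (g i))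
  refine mem_commutator_iff_exists_isProdOfCommutators.mpr
    ⟨C + hfin.toFinset.sup m, isProdOfCommutators_pi_iff.mpr fun i => ?_⟩
  by_cases hi : commWidth (G i) = ⊤
  · exact (hm i).mono (le_add_left (Finset.le_sup (hfin.mem_toFinset.mpr hi)))
  · exact (commWidth_le_iff.mp (hC i hi) (g i)).mono (Nat.le_add_right _ _)

end Pi

/-- Let `(G i)_{i ∈ I}` be a family of perfect groups. The product `∏ i, G i` is perfect if
and only if the set of indices with infinite commutator width is finite and the commutator
width is bounded on its complement. -/
theorem pi_perfect_iff_commWidth_bounded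
    {I : Type*} (G : I → Type*) [∀ i, Group (G i)]
    (hperf : ∀ i, commutator (G i) = ⊤) :
    commutator (∀ i, G i) = ⊤ ↔
      ({i : I | commWidth (G i) = ⊤}.Finite ∧
        ∃ C : ℕ, ∀ i : I, commWidth (G i) ≠ ⊤ → commWidth (G i) ≤ C) :=
  ⟨fun h => ⟨finite_commWidth_eq_top_of_commutator_pi_eq_top h,
      exists_commWidth_le_of_commutator_pi_eq_top h⟩,
    fun ⟨hfin, _, hC⟩ => commutator_pi_eq_top hperf hfin hC⟩
end

section
/- Let (G_i)_{i∈I} be a family of groups, X a compact topological space, ι : I → X any map, and N a normal subgroup of ∏_{i∈I} G_i. Suppose that for every p ∈ X, N surjects onto the stalk at p of the direct image presheaf of the product presheaf along ι. Then N contains the commutator subgroup of ∏_{i∈I} G_i. -/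
/-!
Fix `a`. The elements `c` with `⁅a, c⁆ ∈ N` form a subgroup: the preimage of the centralizer of
the class of `a` in `∏ G i ⧸ N`. If `n ∈ N` agrees with `a` on `ι⁻¹(U)`, then every `c`
supported on `ι⁻¹(U)` satisfies `⁅a, c⁆ = ⁅n, c⁆ ∈ N`. Finitely many such `U` cover `X` by
compactness, and every element of the product is a product of elements supported on the
corresponding pieces, so `⁅a, b⁆ ∈ N` for all `b`.
-/

open scoped commutatorElement

section

variable {I : Type*} {G : I → Type*} [∀ i, Group (G i)]

theorem Subgroup.pi_compl_union_le_sup (S T : Set I) :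
    Subgroup.pi (S ∪ T)ᶜ (fun i => (⊥ : Subgroup (G i))) ≤
      Subgroup.pi Sᶜ (fun _ => ⊥) ⊔ Subgroup.pi Tᶜ (fun _ => ⊥) := by
  classical
  intro c hc
  rw [Subgroup.mem_pi] at hc
  have hsplit : c = S.piecewise c (1 : ∀ i, G i) * S.piecewise (1 : ∀ i, G i) c := by
    funext i
    by_cases hi : i ∈ S <;> simp [hi]
  rw [hsplit]
  refine Subgroup.mul_mem_sup ((Subgroup.mem_pi _).2 fun i hi => ?_)
    ((Subgroup.mem_pi _).2 fun i hi => ?_)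
  · simp [Set.piecewise_eq_of_notMem _ _ _ hi]
  · by_cases hS : i ∈ S
    · simp [hS]
    · simpa [hS] using hc i fun h => h.elim hS hi

theorem Subgroup.pi_compl_biUnion_le_iSup {κ : Type*} (T : κ → Set I) (s : Finset κ) :
    Subgroup.pi (⋃ k ∈ s, T k)ᶜ (fun i => (⊥ : Subgroup (G i))) ≤
      ⨆ k ∈ s, Subgroup.pi (T k)ᶜ (fun _ => ⊥) := by
  classical
  induction s using Finset.induction_on with
  | empty => simp [Subgroup.pi_bot]
  | insert k s _ ih =>
    rw [Finset.set_biUnion_insert, Finset.iSup_insert]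
    exact (Subgroup.pi_compl_union_le_sup _ _).trans (sup_le_sup_left ih _)

theorem commutatorElement_eq_of_eqOn_of_mem_pi {a n c : ∀ i, G i} {S : Set I}
    (h : ∀ i ∈ S, n i = a i) (hc : c ∈ Subgroup.pi Sᶜ (fun _ => ⊥)) :
    ⁅n, c⁆ = ⁅a, c⁆ := by
  funext i
  by_cases hi : i ∈ S
  · simp [commutatorElement_def, h i hi]
  · have : c i = 1 := Subgroup.mem_bot.1 ((Subgroup.mem_pi _).1 hc i hi)
    simp [commutatorElement_def, this]

end

theorem commutatorElement_mem_iff_mem_comap_centralizer {G : Type*} [Group G] (N : Subgroup G)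
    [N.Normal] (a b : G) :
    ⁅a, b⁆ ∈ N ↔ b ∈ (Subgroup.centralizer {(a : G ⧸ N)}).comap (QuotientGroup.mk' N) := by
  rw [Subgroup.mem_comap, Subgroup.mem_centralizer_singleton_iff, ← QuotientGroup.eq_one_iff,
    QuotientGroup.mk'_apply, ← QuotientGroup.mk'_apply, map_commutatorElement,
    commutatorElement_eq_one_iff_commute]
  exact ⟨fun h => h.eq.symm, fun h => h.symm⟩

/-- Let `(G i)_{i ∈ I}` be a family of groups, `X` a compact space, `ι : I → X` any map, and
`N` a normal subgroup of `∏ i, G i`. If for every `p ∈ X` the subgroup `N` surjects onto the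
stalk at `p` of the direct image presheaf (i.e. every `g` agrees with some element of `N` on
`ι⁻¹(U)` for some open neighborhood `U` of `p`), then `N` contains the commutator subgroup
of `∏ i, G i`. -/
theorem commutator_le_of_surjective_on_stalks
    {I : Type*} (G : I → Type*) [∀ i, Group (G i)]
    {X : Type*} [TopologicalSpace X] [CompactSpace X] (ι : I → X)
    (N : Subgroup (∀ i, G i)) (hnorm : N.Normal)
    (hstalk : ∀ p : X, ∀ g : ∀ i, G i, ∃ n ∈ N, ∃ U : Set X,
      IsOpen U ∧ p ∈ U ∧ ∀ i : I, ι i ∈ U → n i = g i) :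
    commutator (∀ i, G i) ≤ N := by
  have := hnorm
  rw [commutator_def, Subgroup.commutator_le]
  intro a _ b _
  simp_rw [commutatorElement_mem_iff_mem_comap_centralizer]
  choose n hn U hU hpU hagree using fun p => hstalk p a
  have hpiece (p : X) : Subgroup.pi (ι ⁻¹' U p)ᶜ (fun _ => ⊥) ≤
      (Subgroup.centralizer {(a : (∀ i, G i) ⧸ N)}).comap (QuotientGroup.mk' N) := fun c hc => by
    rw [← commutatorElement_mem_iff_mem_comap_centralizer,
      ← commutatorElement_eq_of_eqOn_of_mem_pi (fun i hi => hagree p i hi) hc,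
      commutatorElement_mem_iff_mem_comap_centralizer, (QuotientGroup.eq_one_iff _).2 (hn p)]
    exact Subgroup.mem_centralizer_singleton_iff.2 ((mul_one _).trans (one_mul _).symm)
  obtain ⟨t, ht⟩ := CompactSpace.elim_nhds_subcover U fun p => (hU p).mem_nhds (hpU p)
  have hcover : Subgroup.pi (⋃ p ∈ t, ι ⁻¹' U p)ᶜ (fun i => (⊥ : Subgroup (G i))) = ⊤ := by
    simp_rw [← Set.preimage_iUnion, ht, Set.top_eq_univ, Set.preimage_univ, Set.compl_univ,
      Subgroup.pi_empty]
  exact (Subgroup.pi_compl_biUnion_le_iSup _ t).trans (iSup₂_le fun p _ => hpiece p)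
    (hcover ▸ Subgroup.mem_top b)
end

section
/- Let (G_i)_{i∈I} be a family of groups such that ∏_{i∈I} G_i is perfect, and let N be a proper normal subgroup of the product. Then either there exists j ∈ I such that the projection of N to G_j is proper, or there exists a free (non-principal) ultrafilter μ on I such that the image of N in the ultraproduct ∏_{i∈I} G_i / μ is a proper subgroup. -/
/-- The normal subgroup of `∏ i, G i` of elements equal to `1` on a set belonging to the
ultrafilter `μ`; the quotient by this subgroup is the ultraproduct `∏ i, G i / μ`. -/
def ultrafilterKer {I : Type*} (G : I → Type*) [∀ i, Group (G i)] (μ : Ultrafilter I) :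
    Subgroup (∀ i, G i) where
  carrier := {g | ∀ᶠ i in (μ : Filter I), g i = 1}
  one_mem' := Filter.Eventually.of_forall fun _ => rfl
  mul_mem' := fun hg hh => by
    filter_upwards [hg, hh] with i h1 h2
    simp [h1, h2]
  inv_mem' := fun hg => by
    filter_upwards [hg] with i h1
    simp [h1]

instance ultrafilterKer_normal {I : Type*} (G : I → Type*) [∀ i, Group (G i)]
    (μ : Ultrafilter I) : (ultrafilterKer G μ).Normal where
  conj_mem n hn g := by
    filter_upwards [hn] with i h1
    simp [Pi.mul_apply, h1]

/-!
If every projection of `N` to a factor and every image of `N` in an ultraproduct is everything,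
then each `y` agrees, on a set belonging to any given ultrafilter, with an element of `N`.
Compactness of `βI` turns this into a finite partition `I = A₁ ∪ ⋯ ∪ Aₖ` and `n₁, …, nₖ ∈ N` with
`y = nⱼ` on `Aⱼ`. Then `⁅x, y⁆ = ∏ⱼ ⁅x · 1_{Aⱼ}, nⱼ⁆` lies in `N` by normality, so `N` contains the
commutator subgroup, which is everything.
-/

/-- Compactness of `βI`, read off at the principal ultrafilters. -/
theorem Ultrafilter.exists_finite_range_forall_mem {I ι : Type*} (A : ι → Set I)
    (h : ∀ μ : Ultrafilter I, ∃ j, A j ∈ μ) :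
    ∃ c : I → ι, (Set.range c).Finite ∧ ∀ i, i ∈ A (c i) := by
  obtain ⟨t, ht⟩ := isCompact_univ.elim_finite_subcover
    (fun j => {μ : Ultrafilter I | A j ∈ μ}) (fun j => ultrafilter_isOpen_basic (A j))
    (fun μ _ => Set.mem_iUnion.2 (h μ))
  have hpure : ∀ i, ∃ j ∈ t, i ∈ A j := fun i => by
    simpa using ht (Set.mem_univ (pure i))
  choose c hct hc using hpure
  exact ⟨c, t.finite_toSet.subset (Set.range_subset_iff.2 hct), hc⟩

section Pi

open scoped commutatorElement

variable {I : Type*} {G : I → Type*} [∀ i, Group (G i)]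

theorem mk'_ultrafilterKer_eq_iff (μ : Ultrafilter I) (a b : ∀ i, G i) :
    QuotientGroup.mk' (ultrafilterKer G μ) a = QuotientGroup.mk' (ultrafilterKer G μ) b ↔
      ∀ᶠ i in (μ : Filter I), a i = b i := by
  rw [QuotientGroup.mk'_apply, QuotientGroup.mk'_apply, QuotientGroup.eq]
  exact Filter.eventually_congr (Filter.Eventually.of_forall fun i => inv_mul_eq_one)

theorem exists_mem_eventually_eq_of_map_mk'_eq_top {μ : Ultrafilter I} {N : Subgroup (∀ i, G i)}
    (h : N.map (QuotientGroup.mk' (ultrafilterKer G μ)) = ⊤) (z : ∀ i, G i) :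
    ∃ n ∈ N, ∀ᶠ i in (μ : Filter I), n i = z i := by
  obtain ⟨n, hn, hnz⟩ := (h ▸ Subgroup.mem_top _ : QuotientGroup.mk' _ z ∈ N.map _)
  exact ⟨n, hn, (mk'_ultrafilterKer_eq_iff μ n z).1 hnz⟩

theorem exists_mem_eventually_eq_of_map_eval_eq_top {j : I} {N : Subgroup (∀ i, G i)}
    (h : N.map (Pi.evalMonoidHom G j) = ⊤) (z : ∀ i, G i) :
    ∃ n ∈ N, ∀ᶠ i in (pure j : Ultrafilter I), n i = z i := by
  obtain ⟨n, hn, hnz⟩ := (h ▸ Subgroup.mem_top _ : z j ∈ N.map (Pi.evalMonoidHom G j))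
  exact ⟨n, hn, Filter.eventually_pure.2 hnz⟩

theorem Subgroup.Normal.pi_ite_commutatorElement_mem {N : Subgroup (∀ i, G i)} (hN : N.Normal)
    (x : ∀ i, G i) {n : ∀ i, G i} (hn : n ∈ N) (A : Set I) [DecidablePred (· ∈ A)] :
    (fun i => if i ∈ A then ⁅x i, n i⁆ else 1) ∈ N := by
  have hx : (fun i => if i ∈ A then ⁅x i, n i⁆ else 1) =
      ⁅fun i => if i ∈ A then x i else 1, n⁆ := by
    funext i
    split_ifs <;> simp [commutatorElement_def, *]
  rw [hx]
  exact Subgroup.commutator_le_right ⊤ N (Subgroup.commutator_mem_commutator trivial hn)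

theorem Subgroup.Normal.commutatorElement_mem_of_locally_mem {N : Subgroup (∀ i, G i)}
    (hN : N.Normal) (x y : ∀ i, G i) (c : I → N) (hc : (Set.range c).Finite)
    (hy : ∀ i, (c i : ∀ i, G i) i = y i) : ⁅x, y⁆ ∈ N := by
  classical
  have hpieces : ∀ t : Finset N, (fun i => if c i ∈ t then ⁅x i, y i⁆ else 1) ∈ N := by
    intro t
    induction t using Finset.induction_on with
    | empty => exact N.one_mem
    | insert j t hj ih =>
      convert N.mul_mem ih (hN.pi_ite_commutatorElement_mem x j.2 (c ⁻¹' {j})) using 1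
      funext i
      by_cases hij : c i = j
      · subst hij
        simp [hj, hy]
      · simp [hij]
  convert hpieces hc.toFinset using 1
  funext i
  simp [commutatorElement_def]

end Pi

/-- Let `(G i)_{i ∈ I}` be a family of groups with `∏ i, G i` perfect, and let `N` be a
proper normal subgroup of the product. Then either some projection of `N` to a factor `G j`
is proper, or there is a free ultrafilter `μ` on `I` such that the image of `N` in the
ultraproduct `∏ i, G i / μ` is proper. -/
theorem proper_normal_subgroup_detected_by_stalks
    {I : Type*} (G : I → Type*) [∀ i, Group (G i)]
    (hperf : commutator (∀ i, G i) = ⊤)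
    (N : Subgroup (∀ i, G i)) (hnorm : N.Normal) (hN : N ≠ ⊤) :
    (∃ j : I, Subgroup.map (Pi.evalMonoidHom G j) N ≠ ⊤) ∨
    (∃ μ : Ultrafilter I, (∀ i : I, μ ≠ pure i) ∧
      Subgroup.map (QuotientGroup.mk' (ultrafilterKer G μ)) N ≠ ⊤) := by
  by_contra! hcon
  obtain ⟨hstalk, hfree⟩ := hcon
  have hlocal : ∀ (z : ∀ i, G i) (μ : Ultrafilter I),
      ∃ n ∈ N, ∀ᶠ i in (μ : Filter I), n i = z i := by
    intro z μ
    by_cases hμ : ∃ j, μ = pure j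
    · obtain ⟨j, rfl⟩ := hμ
      exact exists_mem_eventually_eq_of_map_eval_eq_top (hstalk j) z
    · exact exists_mem_eventually_eq_of_map_mk'_eq_top (hfree μ (not_exists.1 hμ)) z
  refine hN (top_le_iff.1 (hperf ▸ Subgroup.commutator_le.2 fun x _ y _ => ?_))
  obtain ⟨c, hc, hcy⟩ := Ultrafilter.exists_finite_range_forall_mem
    (fun n : N => {i | (n : ∀ i, G i) i = y i}) fun μ => by
      obtain ⟨n, hn, hny⟩ := hlocal y μ
      exact ⟨⟨n, hn⟩, hny⟩
  exact hnorm.commutatorElement_mem_of_locally_mem x y c hc hcy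
end

section
/- In SU(2) with the bi-invariant spherical metric d of diameter π, let a be a non-central element and set θ = ℓ(δ(a)) where δ is the root c ↦ c² on a maximal torus containing a conjugate of a. Then the set C(a)C(a⁻¹) of products of a conjugate of a and a conjugate of a⁻¹ equals the closed metric ball of radius θ around the identity, and consequently every element of SU(2) is a product of at most 2⌈π/θ⌉ conjugates of a and a⁻¹. -/
/-- The special unitary group `SU(2)`, as a subgroup of the unitary group of `2 × 2`
complex matrices. -/
def SU2 : Subgroup (Matrix.unitaryGroup (Fin 2) ℂ) where
  carrier := {A | ((A : Matrix (Fin 2) (Fin 2) ℂ)).det = 1}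
  one_mem' := by simp
  mul_mem' := by
    intro a b ha hb
    simp only [Set.mem_setOf_eq, Submonoid.coe_mul, Matrix.det_mul] at *
    rw [ha, hb, one_mul]
  inv_mem' := by
    intro a ha
    simp only [Set.mem_setOf_eq] at *
    have h : ((a⁻¹ : Matrix.unitaryGroup (Fin 2) ℂ) : Matrix (Fin 2) (Fin 2) ℂ)
        = star ((a : Matrix.unitaryGroup (Fin 2) ℂ) : Matrix (Fin 2) (Fin 2) ℂ) := rfl
    rw [h, Matrix.star_eq_conjTranspose, Matrix.det_conjTranspose, ha]
    simp

/-- The bi-invariant spherical (angular) metric of diameter `π` on `SU(2)`, identified with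
the round unit `3`-sphere: `d(x, y) = arccos (Re (tr (x y⁻¹)) / 2)`. -/
noncomputable def su2dist (x y : SU2) : ℝ :=
  Real.arccos ((Matrix.trace
    (((x * y⁻¹ : SU2) : Matrix.unitaryGroup (Fin 2) ℂ) : Matrix (Fin 2) (Fin 2) ℂ)).re / 2)

/-!
Write elements of `SU(2)` as quaternionic matrices `[[α, -β̄], [β, ᾱ]]` with `|α|² + |β|² = 1`.
Half the trace, `Re α`, is the cosine of the distance to `1`, and it is a complete conjugacy
invariant: an explicit unit eigenvector conjugates every element into the diagonal torus. For
`t = diag(c, c̄)` and `u` with first column `(α, β)`, half the trace of `t · u t u⁻¹` is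
`Re(c²)|α|² + |β|²`, which sweeps out exactly `[Re c², 1]`; as `a⁻¹` is conjugate to `a`, this makes
`C(a)C(a⁻¹)` the ball of radius `θ = arccos Re c²`. Since `a` is not central, `θ > 0`, and each `g`
has an `n`-th root in a conjugate of the torus within distance `π / n ≤ θ` of `1`, for
`n = ⌈π / θ⌉`; so `g = (y z)ⁿ` with `y ∈ C(a)`, `z ∈ C(a⁻¹)`.
-/

open Matrix Complex ComplexConjugate

lemma exists_ofFn_prod_eq_mul_pow {M : Type*} [Monoid M] (y w : M) (n : ℕ) :
    ∃ u : Fin (2 * n) → M, (∀ i, u i = y ∨ u i = w) ∧ (List.ofFn u).prod = (y * w) ^ n := by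
  induction n with
  | zero => exact ⟨Fin.elim0, fun i ↦ i.elim0, by simp⟩
  | succ n ih =>
    obtain ⟨u, hu, hprod⟩ := ih
    refine ⟨Fin.append u ![y, w], fun i ↦ ?_, ?_⟩
    · refine Fin.addCases (fun i ↦ ?_) (fun i ↦ ?_) i
      · simpa using hu i
      · fin_cases i <;> simp
    · rw [List.ofFn_fin_append, List.prod_append, hprod, pow_succ]
      simp

lemma Circle.re_sq_mem_Icc (z : Circle) : ((z : ℂ) ^ 2).re ∈ Set.Icc (-1) 1 :=
  abs_le.1 <| (abs_re_le_norm _).trans (by simp [Circle.norm_coe])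

namespace SU2

noncomputable def mat (x : SU2) : Matrix (Fin 2) (Fin 2) ℂ :=
  ((x : Matrix.unitaryGroup (Fin 2) ℂ) : Matrix (Fin 2) (Fin 2) ℂ)

lemma mat_injective : Function.Injective mat := fun _ _ h ↦ Subtype.ext (Subtype.ext h)

lemma mat_mul (x y : SU2) : mat (x * y) = mat x * mat y := rfl
lemma mat_inv (x : SU2) : mat x⁻¹ = star (mat x) := rfl

lemma star_mat_mul (x : SU2) : star (mat x) * mat x = 1 := x.1.2.1

def quatMat (α β : ℂ) : Matrix (Fin 2) (Fin 2) ℂ := !![α, -conj β; β, conj α]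

lemma quatMat_mul (α β γ δ : ℂ) :
    quatMat α β * quatMat γ δ = quatMat (α * γ - conj β * δ) (β * γ + conj α * δ) := by
  ext i j
  fin_cases i <;> fin_cases j <;> simp [quatMat] <;> ring

lemma star_quatMat (α β : ℂ) : star (quatMat α β) = quatMat (conj α) (-β) := by
  ext i j
  fin_cases i <;> fin_cases j <;> simp [quatMat]

lemma quatMat_one_zero : quatMat 1 0 = 1 := by
  ext i j
  fin_cases i <;> fin_cases j <;> simp [quatMat]

lemma det_quatMat (α β : ℂ) : (quatMat α β).det = normSq α + normSq β := by
  simp [quatMat, det_fin_two_of, mul_conj, mul_comm (conj β)]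

lemma re_trace_quatMat (α β : ℂ) : (quatMat α β).trace.re / 2 = α.re := by
  simp [quatMat, trace_fin_two_of]

lemma quatMat_mem_unitaryGroup {α β : ℂ} (h : normSq α + normSq β = 1) :
    quatMat α β ∈ unitaryGroup (Fin 2) ℂ := by
  rw [mem_unitaryGroup_iff, star_quatMat, quatMat_mul, ← quatMat_one_zero]
  congr 1 <;> simp only [mul_conj, mul_neg, neg_mul, sub_neg_eq_add, mul_comm (conj β)]
  · exact_mod_cast h
  · ring

noncomputable def mk (α β : ℂ) (h : normSq α + normSq β = 1) : SU2 :=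
  ⟨⟨quatMat α β, quatMat_mem_unitaryGroup h⟩, by
    change (quatMat α β).det = 1
    rw [det_quatMat]
    exact_mod_cast h⟩

lemma mat_mk (α β : ℂ) (h : normSq α + normSq β = 1) : mat (mk α β h) = quatMat α β :=
  rfl

lemma exists_eq_mk (x : SU2) : ∃ α β h, x = mk α β h := by
  set M := mat x
  have hdet : M.det = 1 := x.2
  have hstar : star M = M.adjugate := by
    calc star M = star M * (M * M.adjugate) := by rw [mul_adjugate, hdet, one_smul, mul_one]
      _ = M.adjugate := by rw [← mul_assoc, star_mat_mul, one_mul]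
  have h01 : M 0 1 = -conj (M 1 0) := by
    have := congrFun (congrFun hstar 1) 0
    simp only [star_apply, RCLike.star_def, adjugate_fin_two, of_apply, cons_val', cons_val_zero,
      cons_val_fin_one, cons_val_one] at this
    simpa using congrArg conj this
  have h11 : M 1 1 = conj (M 0 0) := by
    simpa [adjugate_fin_two] using (congrFun (congrFun hstar 0) 0).symm
  have hM : M = quatMat (M 0 0) (M 1 0) := by
    rw [quatMat, ← h01, ← h11]
    exact eta_fin_two M
  have h : normSq (M 0 0) + normSq (M 1 0) = 1 := by
    exact_mod_cast (det_quatMat _ _).symm.trans (hM ▸ hdet)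
  exact ⟨_, _, h, mat_injective hM⟩

noncomputable def halfTrace (x : SU2) : ℝ := (mat x).trace.re / 2

lemma halfTrace_mk (α β : ℂ) (h : normSq α + normSq β = 1) :
    halfTrace (mk α β h) = α.re :=
  re_trace_quatMat α β

lemma halfTrace_mem_Icc (x : SU2) : halfTrace x ∈ Set.Icc (-1) 1 := by
  obtain ⟨α, β, h, rfl⟩ := exists_eq_mk x
  rw [halfTrace_mk, Set.mem_Icc, ← abs_le, ← sq_le_one_iff_abs_le_one]
  nlinarith [re_sq_le_normSq α, normSq_nonneg β]

lemma halfTrace_inv (x : SU2) : halfTrace x⁻¹ = halfTrace x := by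
  obtain ⟨α, β, h, rfl⟩ := exists_eq_mk x
  rw [halfTrace, mat_inv, mat_mk, star_quatMat, re_trace_quatMat, halfTrace_mk, conj_re]

lemma _root_.IsConj.halfTrace_eq {x y : SU2} (hxy : IsConj x y) : halfTrace x = halfTrace y := by
  obtain ⟨g, rfl⟩ := isConj_iff.1 hxy
  rw [halfTrace, halfTrace, mat_mul, mat_mul, mat_inv, trace_mul_comm, ← mul_assoc, star_mat_mul,
    one_mul]

lemma su2dist_one (x : SU2) : su2dist x 1 = Real.arccos (halfTrace x) := by
  rw [su2dist, inv_one, mul_one]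
  rfl

noncomputable def torus : Circle →* SU2 where
  toFun z := mk z 0 (by simp)
  map_one' := mat_injective <| by
    change quatMat ((1 : Circle) : ℂ) 0 = 1
    rw [Circle.coe_one, quatMat_one_zero]
  map_mul' z w := mat_injective <| by
    rw [mat_mul, mat_mk, mat_mk, mat_mk, quatMat_mul]
    simp

lemma mat_torus (z : Circle) : mat (torus z) = quatMat z 0 := rfl

lemma halfTrace_torus (z : Circle) : halfTrace (torus z) = (z : ℂ).re :=
  re_trace_quatMat _ _

lemma isConj_torus_mk_of_eigenvector {α β : ℂ} (h : normSq α + normSq β = 1) (z : Circle)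
    {v₁ v₂ : ℂ} (hv : v₁ ≠ 0 ∨ v₂ ≠ 0) (h₁ : α * v₁ - conj β * v₂ = z * v₁)
    (h₂ : β * v₁ + conj α * v₂ = z * v₂) : IsConj (torus z) (mk α β h) := by
  have hpos : 0 < normSq v₁ + normSq v₂ := by
    rcases hv with hv | hv
    · exact add_pos_of_pos_of_nonneg (normSq_pos.2 hv) (normSq_nonneg _)
    · exact add_pos_of_nonneg_of_pos (normSq_nonneg _) (normSq_pos.2 hv)
  set s : ℝ := (√(normSq v₁ + normSq v₂))⁻¹
  have hw : normSq (v₁ * s) + normSq (v₂ * s) = 1 := by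
    simp only [normSq_mul, normSq_ofReal, s, ← mul_inv, Real.mul_self_sqrt hpos.le, ← add_mul]
    exact mul_inv_cancel₀ hpos.ne'
  refine isConj_iff.2 ⟨mk _ _ hw, mul_inv_eq_of_eq_mul (mat_injective ?_)⟩
  simp only [mat_mul, mat_mk, mat_torus, quatMat_mul, map_mul, conj_ofReal]
  congr 1
  · linear_combination (-(s : ℂ)) * h₁
  · linear_combination (-(s : ℂ)) * h₂

lemma isConj_torus_of_halfTrace_eq {z : Circle} {x : SU2}
    (hz : halfTrace (torus z) = halfTrace x) : IsConj (torus z) x := by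
  obtain ⟨α, β, h, rfl⟩ := exists_eq_mk x
  by_cases hdeg : β = 0 ∧ α = z
  · obtain ⟨rfl, rfl⟩ := hdeg
    rfl
  have hα : α * conj α + β * conj β = 1 := by
    simp only [mul_conj]; exact_mod_cast h
  have hz₁ : (z : ℂ) * conj (z : ℂ) = 1 := by simp [mul_conj]
  have hz₂ : (z : ℂ) + conj (z : ℂ) = α + conj α := by
    rw [add_conj, add_conj, ← halfTrace_torus, hz, halfTrace_mk]
  -- `(β̄, α - z)` is an eigenvector of `mk α β h` for the eigenvalue `z`
  refine isConj_torus_mk_of_eigenvector h z (v₁ := conj β) (v₂ := α - z) ?_ (by ring)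
    (by linear_combination hα + (z : ℂ) * hz₂ - hz₁)
  contrapose! hdeg
  exact ⟨by simpa using hdeg.1, sub_eq_zero.1 hdeg.2⟩

lemma halfTrace_torus_exp (θ : ℝ) : halfTrace (torus (Circle.exp θ)) = Real.cos θ := by
  rw [halfTrace_torus, Circle.coe_exp, exp_ofReal_mul_I_re]

lemma isConj_torus_exp_arccos (x : SU2) :
    IsConj (torus (Circle.exp (Real.arccos (halfTrace x)))) x := by
  refine isConj_torus_of_halfTrace_eq ?_
  rw [halfTrace_torus_exp, Real.cos_arccos (halfTrace_mem_Icc x).1 (halfTrace_mem_Icc x).2]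

lemma isConj_iff_halfTrace_eq {x y : SU2} : IsConj x y ↔ halfTrace x = halfTrace y := by
  refine ⟨IsConj.halfTrace_eq, fun hxy ↦ ?_⟩
  exact (isConj_torus_exp_arccos x).symm.trans (hxy ▸ isConj_torus_exp_arccos y)

lemma halfTrace_torus_mul_conj_mk (z : Circle) {α β : ℂ} (h : normSq α + normSq β = 1) :
    halfTrace (torus z * (mk α β h * torus z * (mk α β h)⁻¹))
      = ((z : ℂ) ^ 2).re * normSq α + normSq β := by
  rw [halfTrace, mat_mul, mat_mul, mat_mul, mat_inv, mat_mk, mat_torus, star_quatMat,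
    quatMat_mul, quatMat_mul, quatMat_mul, re_trace_quatMat]
  have hz : (z : ℂ) * conj (z : ℂ) = 1 := by simp [mul_conj]
  have re_eq (w : ℂ) (hw : w = (z : ℂ) ^ 2 * normSq α + normSq β) :
      w.re = ((z : ℂ) ^ 2).re * normSq α + normSq β := by
    simp [hw]
  refine re_eq _ ?_
  rw [← mul_conj, ← mul_conj]
  simp only [map_mul, map_zero, mul_zero, sub_zero, add_zero, zero_mul]
  linear_combination (β * conj β) * hz

lemma re_sq_le_halfTrace_torus_mul_conj (z : Circle) (u : SU2) :
    ((z : ℂ) ^ 2).re ≤ halfTrace (torus z * (u * torus z * u⁻¹)) := by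
  obtain ⟨α, β, h, rfl⟩ := exists_eq_mk u
  rw [halfTrace_torus_mul_conj_mk]
  nlinarith [(Circle.re_sq_mem_Icc z).2, normSq_nonneg β]

lemma exists_halfTrace_torus_mul_conj_eq (z : Circle) {p : ℝ} (hzp : ((z : ℂ) ^ 2).re ≤ p)
    (hp : p ≤ 1) : ∃ u : SU2, halfTrace (torus z * (u * torus z * u⁻¹)) = p := by
  set q := ((z : ℂ) ^ 2).re
  have hq : q ≤ 1 := (Circle.re_sq_mem_Icc z).2
  -- when `q = 1` also `p = 1`, and the junk value `s = 0` still works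
  set s := (1 - p) / (1 - q)
  have hs₀ : 0 ≤ s := div_nonneg (by linarith) (by linarith)
  have hs₁ : s ≤ 1 := div_le_one_of_le₀ (by linarith) (by linarith)
  have hqs : (1 - q) * s = 1 - p := by
    rcases eq_or_lt_of_le hq with hq | hq
    · simp [hq, show p = 1 by linarith]
    · exact mul_div_cancel₀ _ (by linarith)
  have h : normSq (√s : ℂ) + normSq (√(1 - s) : ℂ) = 1 := by
    rw [normSq_ofReal, normSq_ofReal, Real.mul_self_sqrt hs₀, Real.mul_self_sqrt (by linarith)]
    ring
  refine ⟨mk _ _ h, ?_⟩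
  rw [halfTrace_torus_mul_conj_mk, normSq_ofReal, normSq_ofReal, Real.mul_self_sqrt hs₀,
    Real.mul_self_sqrt (by linarith)]
  linarith

lemma exists_isConj_mul_isConj_inv_iff {z : Circle} {a : SU2} (ha : IsConj (torus z) a)
    (x : SU2) : (∃ y w, IsConj a y ∧ IsConj a⁻¹ w ∧ x = y * w)
      ↔ ((z : ℂ) ^ 2).re ≤ halfTrace x := by
  have ha' : IsConj (torus z) a⁻¹ := ha.trans (isConj_iff_halfTrace_eq.2 (halfTrace_inv a).symm)
  have hconj_a (y : SU2) : IsConj a y ↔ IsConj (torus z) y := ⟨ha.trans, ha.symm.trans⟩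
  have hconj_a' (y : SU2) : IsConj a⁻¹ y ↔ IsConj (torus z) y := ⟨ha'.trans, ha'.symm.trans⟩
  simp only [hconj_a, hconj_a']
  constructor
  · rintro ⟨_, _, hy, hw, rfl⟩
    obtain ⟨g, rfl⟩ := isConj_iff.1 hy
    obtain ⟨k, rfl⟩ := isConj_iff.1 hw
    have hconj : IsConj (torus z * (g⁻¹ * k * torus z * (g⁻¹ * k)⁻¹))
        (g * torus z * g⁻¹ * (k * torus z * k⁻¹)) := isConj_iff.2 ⟨g, by group⟩
    exact (re_sq_le_halfTrace_torus_mul_conj z _).trans_eq hconj.halfTrace_eq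
  · intro hzx
    obtain ⟨u, hu⟩ := exists_halfTrace_torus_mul_conj_eq z hzx (halfTrace_mem_Icc x).2
    obtain ⟨g, rfl⟩ := isConj_iff.1 (isConj_iff_halfTrace_eq.2 hu)
    exact ⟨g * torus z * g⁻¹, g * u * torus z * (g * u)⁻¹, isConj_iff.2 ⟨g, rfl⟩,
      isConj_iff.2 ⟨g * u, rfl⟩, by group⟩

lemma exists_pow_eq_su2dist_le (g : SU2) {n : ℕ} (hn : 0 < n) :
    ∃ h : SU2, su2dist h 1 ≤ Real.pi / n ∧ h ^ n = g := by
  set φ := Real.arccos (halfTrace g)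
  obtain ⟨c, hc⟩ := isConj_iff.1 (isConj_torus_exp_arccos g)
  refine ⟨c * torus (Circle.exp (φ / n)) * c⁻¹, ?_, ?_⟩
  · have hφ : φ / n ∈ Set.Icc 0 Real.pi :=
      ⟨div_nonneg (Real.arccos_nonneg _) n.cast_nonneg,
        (div_le_self (Real.arccos_nonneg _) (mod_cast hn)).trans (Real.arccos_le_pi _)⟩
    rw [su2dist_one, ← (isConj_iff.2 ⟨c, rfl⟩).halfTrace_eq, halfTrace_torus_exp,
      Real.arccos_cos hφ.1 hφ.2]
    exact div_le_div_of_nonneg_right (Real.arccos_le_pi _) n.cast_nonneg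
  · rw [conj_pow, ← map_pow, ← Circle.exp_natCast_mul, mul_div_cancel₀ _ (by positivity), hc]

lemma su2dist_one_le_arccos_iff {q : ℝ} (hq : q ∈ Set.Icc (-1) 1) (x : SU2) :
    su2dist x 1 ≤ Real.arccos q ↔ q ≤ halfTrace x := by
  rw [su2dist_one]
  exact Real.strictAntiOn_arccos.le_iff_ge (halfTrace_mem_Icc x) hq

lemma torus_mem_center_of_one_le_re_sq {z : Circle} (hz : 1 ≤ ((z : ℂ) ^ 2).re) :
    torus z ∈ Subgroup.center SU2 := by
  have hz2 : z ^ 2 = 1 := by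
    have hre : ((z : ℂ) ^ 2).re = 1 := le_antisymm (Circle.re_sq_mem_Icc z).2 hz
    have hnorm : normSq ((z : ℂ) ^ 2) = 1 := by simp
    rw [normSq_apply, hre] at hnorm
    have him : ((z : ℂ) ^ 2).im = 0 := by nlinarith
    rw [← Circle.coe_inj, Circle.coe_pow, Circle.coe_one]
    exact Complex.ext (by simpa using hre) (by simpa using him)
  have hconj : conj (z : ℂ) = z := by
    rw [← Circle.coe_inv_eq_conj, inv_eq_of_mul_eq_one_right (by rw [← sq, hz2])]
  have hscalar : mat (torus z) = (z : ℂ) • 1 := by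
    ext i j
    fin_cases i <;> fin_cases j <;> simp [mat_torus, quatMat, hconj]
  refine Subgroup.mem_center_iff.2 fun g ↦ mat_injective ?_
  rw [mat_mul, mat_mul, hscalar, mul_smul_comm, smul_mul_assoc, mul_one, one_mul]

lemma exists_torus_eq_of_mat_eq_diagonal {t : SU2} {c : ℂ}
    (ht : mat t = diagonal ![c, conj c]) : ∃ z : Circle, (z : ℂ) = c ∧ torus z = t := by
  have hquat : quatMat c 0 = diagonal ![c, conj c] := by
    ext i j
    fin_cases i <;> fin_cases j <;> simp [quatMat]
  have hc : normSq c = 1 := by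
    have hdet : (mat t).det = 1 := t.2
    rw [ht, ← hquat, det_quatMat] at hdet
    simpa using hdet
  refine ⟨⟨c, mem_sphere_zero_iff_norm.2 ?_⟩, rfl, mat_injective ?_⟩
  · rwa [normSq_eq_norm_sq, pow_eq_one_iff_of_nonneg (norm_nonneg c) two_ne_zero] at hc
  · change quatMat c 0 = mat t
    rw [ht, hquat]

end SU2

open SU2

/-- Let `a ∈ SU(2)` be non-central, conjugate to the diagonal torus element
`t = diag (c, c̄)`, and let `θ = ℓ(δ(a)) = arccos (Re (c²))` be the angular distance from `1`
to the value of the root `δ : c ↦ c²`. Then `C(a)C(a⁻¹)` is exactly the closed ball of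
radius `θ` around the identity for the spherical metric, and consequently every element of
`SU(2)` is a product of at most `2⌈π/θ⌉` conjugates of `a` and `a⁻¹`. -/
theorem su2_conj_class_prod_eq_ball_and_bounded_generation
    (a : SU2) (ha : a ∉ Subgroup.center SU2)
    (c : ℂ) (t : SU2)
    (ht : ((t : Matrix.unitaryGroup (Fin 2) ℂ) : Matrix (Fin 2) (Fin 2) ℂ)
      = Matrix.diagonal ![c, starRingEnd ℂ c])
    (hconj : IsConj t a)
    (θ : ℝ) (hθ : θ = Real.arccos ((c ^ 2).re)) :
    {x : SU2 | ∃ y z : SU2, IsConj a y ∧ IsConj a⁻¹ z ∧ x = y * z}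
      = {x : SU2 | su2dist x 1 ≤ θ} ∧
    ∀ g : SU2, ∃ m : ℕ, m ≤ 2 * ⌈Real.pi / θ⌉₊ ∧
      ∃ u : Fin m → SU2, (∀ i, IsConj a (u i) ∨ IsConj a⁻¹ (u i)) ∧
        (List.ofFn u).prod = g := by
  obtain ⟨z, rfl, rfl⟩ := exists_torus_eq_of_mat_eq_diagonal ht
  have hball : {x : SU2 | ∃ y z : SU2, IsConj a y ∧ IsConj a⁻¹ z ∧ x = y * z}
      = {x : SU2 | su2dist x 1 ≤ θ} := Set.ext fun x ↦
    (exists_isConj_mul_isConj_inv_iff hconj x).trans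
      (hθ ▸ su2dist_one_le_arccos_iff (Circle.re_sq_mem_Icc z) x).symm
  have hθ_pos : 0 < θ := by
    rw [hθ, Real.arccos_pos]
    by_contra! h
    have hcenter := torus_mem_center_of_one_le_re_sq h
    exact ha (hconj.eq_of_left_mem_center hcenter ▸ hcenter)
  refine ⟨hball, fun g ↦ ?_⟩
  set n := ⌈Real.pi / θ⌉₊
  have hn : 0 < n := Nat.ceil_pos.2 (div_pos Real.pi_pos hθ_pos)
  have hπn : Real.pi / n ≤ θ := div_le_of_le_mul₀ n.cast_nonneg hθ_pos.le
    (mul_comm θ n ▸ (div_le_iff₀ hθ_pos).1 (Nat.le_ceil _))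
  obtain ⟨h, hh, rfl⟩ := exists_pow_eq_su2dist_le g hn
  have hmem : h ∈ {x : SU2 | su2dist x 1 ≤ θ} := hh.trans hπn
  rw [← hball] at hmem
  obtain ⟨y, w, hy, hw, rfl⟩ := hmem
  obtain ⟨u, hu, hprod⟩ := exists_ofFn_prod_eq_mul_pow y w n
  exact ⟨2 * n, le_rfl, u, fun i ↦ (hu i).elim (fun h ↦ .inl (h ▸ hy))
    (fun h ↦ .inr (h ▸ hw)), hprod⟩
end
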